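/- arXiv:1811.06365 — 4 statements merged into one kernel-verified Lean document; each statement's English description precedes it below -/
import Mathlib

section
/- A matrix C : Y × X → ℚ between finite sets is a comonoid morphism in Q⟨FinSet⟩ (i.e., compatible with the diagonal comultiplications and the all-ones counits) if and only if C is the graph matrix of a function X → Y. Consequently, the set of comonoid morphisms from X to Y in Q⟨FinSet⟩ is in natural bijection with the set of functions X → Y. -/
open scoped Kronecker

/-- Comultiplication matrix of the comonoid `X` in `Q⟨FinSet⟩`. -/
def deltaM (X : Type) [DecidableEq X] : Matrix (X × X) X ℚ :=
  fun p x => if x = p.1 ∧ x = p.2 then 1 else 0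

/-- Counit matrix (all-ones row vector). -/
def epsM (X : Type) : Matrix Unit X ℚ := fun _ _ => 1

/-- The graph matrix of a function `f : X → Y`: entry `1` at `(f x, x)`, `0` elsewhere. -/
def graphM {X Y : Type} [DecidableEq Y] (f : X → Y) : Matrix Y X ℚ :=
  fun y x => if y = f x then 1 else 0

set_option linter.unusedSectionVars false

section aux
variable {X Y : Type} [Fintype X] [Fintype Y] [DecidableEq X] [DecidableEq Y]

lemma mulδ (A : Matrix (Y×Y) (X×X) ℚ) (y : Y×Y) (x : X) :
    (A * deltaM X) y x = A y (x, x) := by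
  simp [Matrix.mul_apply, deltaM, Fintype.sum_prod_type, ite_and, Finset.sum_ite_eq, eq_comm (a := x)]

lemma δmul (C : Matrix Y X ℚ) (y : Y×Y) (x : X) :
    (deltaM Y * C) y x = if y.1 = y.2 then C y.1 x else 0 := by
  simp only [Matrix.mul_apply, deltaM]
  rcases eq_or_ne y.1 y.2 with h | h
  · simp [← h, eq_comm]
  · simp only [if_neg h]
    apply Finset.sum_eq_zero
    intro z _
    rcases eq_or_ne z y.1 with rfl | hz
    · simp [h]
    · simp [hz]

lemma εmul (C : Matrix Y X ℚ) (x : X) : (epsM Y * C) () x = ∑ y, C y x := by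
  simp [Matrix.mul_apply, epsM]

lemma graphM_hom (f : X → Y) :
    (graphM f ⊗ₖ graphM f) * deltaM X = deltaM Y * graphM f ∧
      epsM Y * graphM f = epsM X := by
  constructor
  · ext y x
    rw [mulδ, δmul]
    simp only [Matrix.kroneckerMap_apply, graphM]
    obtain ⟨y1, y2⟩ := y
    by_cases hA : y1 = f x <;> by_cases hB : y2 = f x <;> simp_all [eq_comm]
  · ext u x
    rw [εmul]
    simp [graphM, epsM]

lemma hom_graphM (C : Matrix Y X ℚ)
    (h1 : (C ⊗ₖ C) * deltaM X = deltaM Y * C) (h2 : epsM Y * C = epsM X) :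
    ∃ f : X → Y, C = graphM f := by
  have key : ∀ y1 y2 x, C y1 x * C y2 x = if y1 = y2 then C y1 x else 0 := by
    intro y1 y2 x
    have := congrFun (congrFun h1 (y1, y2)) x
    rw [mulδ, δmul] at this
    simpa using this
  have hsum : ∀ x, ∑ y, C y x = 1 := by
    intro x
    have := congrFun (congrFun h2 ()) x
    rw [εmul] at this
    simpa [epsM] using this
  have hex : ∀ x, ∃ y, C y x ≠ 0 := by
    intro x
    by_contra hc
    push_neg at hc
    have : (∑ y, C y x) = 0 := Finset.sum_eq_zero fun y _ => hc y
    rw [hsum x] at this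
    norm_num at this
  choose f hf using hex
  have hf1 : ∀ x, C (f x) x = 1 := by
    intro x
    have hk := key (f x) (f x) x
    rw [if_pos rfl] at hk
    rcases mul_eq_zero.mp (by linear_combination hk : C (f x) x * (C (f x) x - 1) = 0) with h | h
    · exact absurd h (hf x)
    · linarith
  refine ⟨f, ?_⟩
  ext y x
  rcases eq_or_ne y (f x) with rfl | hy
  · simp [graphM, hf1]
  · have := key y (f x) x
    rw [if_neg hy, hf1, mul_one] at this
    simp [graphM, hy, this]

end aux

/-- A matrix `C : Y × X → ℚ` between finite sets is a comonoid morphism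
in `Q⟨FinSet⟩` (i.e. `(C ⊗ C)·δ_X = δ_Y·C` and `ε_Y·C = ε_X`) if and only if `C` is
the graph matrix of a function `X → Y`.  Consequently the set of comonoid morphisms
from `X` to `Y` is in bijection with the set of functions `X → Y`. -/
theorem stmt6 (X Y : Type) [Fintype X] [Fintype Y] [DecidableEq X] [DecidableEq Y] :
    (∀ C : Matrix Y X ℚ,
      ((C ⊗ₖ C) * deltaM X = deltaM Y * C ∧ epsM Y * C = epsM X) ↔
        ∃ f : X → Y, C = graphM f) ∧
    ∃ e : {C : Matrix Y X ℚ //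
        (C ⊗ₖ C) * deltaM X = deltaM Y * C ∧ epsM Y * C = epsM X} ≃ (X → Y),
      ∀ C, graphM (e C) = (C : Matrix Y X ℚ) := by
  have main : ∀ C : Matrix Y X ℚ,
      ((C ⊗ₖ C) * deltaM X = deltaM Y * C ∧ epsM Y * C = epsM X) ↔
        ∃ f : X → Y, C = graphM f := by
    intro C
    constructor
    · rintro ⟨h1, h2⟩; exact hom_graphM C h1 h2
    · rintro ⟨f, rfl⟩; exact graphM_hom f
  refine ⟨main, ?_⟩
  have hg : ∀ C : {C : Matrix Y X ℚ //
      (C ⊗ₖ C) * deltaM X = deltaM Y * C ∧ epsM Y * C = epsM X},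
      ∃ f : X → Y, (C : Matrix Y X ℚ) = graphM f := fun C => (main C).mp C.2
  choose g hgspec using hg
  refine ⟨⟨g, fun f => ⟨graphM f, (main _).mpr ⟨f, rfl⟩⟩, ?_, ?_⟩, fun C => (hgspec C).symm⟩
  · intro C
    exact Subtype.ext (hgspec C).symm
  · intro f
    have h := hgspec ⟨graphM f, (main _).mpr ⟨f, rfl⟩⟩
    funext x
    have hx := congrFun (congrFun h.symm (f x)) x
    simp only [graphM, if_pos rfl] at hx
    by_contra hne
    rw [if_neg (fun hh => hne hh.symm)] at hx
    norm_num at hx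
end

section
/- Let k be a field with algebraic closure k̄ and absolute Galois group G, and let X, Y be finite étale k-schemes. Then the natural base-change map Hom_k(X, Y) → Hom_{k̄}(X_{k̄}, Y_{k̄}) is injective with image exactly the G-fixed points: Hom_k(X,Y) ≅ Hom_{k̄}(X_{k̄}, Y_{k̄})^G. -/
open scoped TensorProduct

/-!
Write `x ∈ k̄ ⊗ A` in a `k`-basis of `A`. If `x` is fixed by `Gal(k̄/k)`, so are its
coefficients, and a Galois-fixed element of `k̄` lies in `k` as soon as it is separable. The
coefficients are separable: the characters of the étale `k̄`-algebra `k̄ ⊗ A` separate points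
and take separable values on `1 ⊗ A`, so a projection of `k̄` with kernel the separable
closure, applied coefficientwise, commutes with them and kills `x` whenever all `χ x` are
separable.
For `x = F (1 ⊗ b)` with `F` Galois-equivariant, this holds because `χ ∘ F` is a character of
`k̄ ⊗ B`; hence `F` maps `1 ⊗ B` into `1 ⊗ A` and is the base change of a `k`-algebra map.
-/

theorem mem_range_algebraMap_of_isSeparable_of_forall_algEquiv_apply_eq
    {K L : Type*} [Field K] [Field L] [Algebra K L] [h : Normal K L] {c : L}
    (hsep : IsSeparable K c) (hfix : ∀ σ : L ≃ₐ[K] L, σ c = c) :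
    c ∈ (algebraMap K L).range := by
  have hint : IsIntegral K c := h.isIntegral c
  have hroots : ((minpoly K c).rootSet L).Subsingleton :=
    Set.subsingleton_singleton.anti fun d hd => by
      obtain ⟨σ, hσ⟩ :=
        minpoly.exists_algEquiv_of_root' hint.isAlgebraic (Polynomial.mem_rootSet.mp hd).2
      rw [← hσ, hfix σ]
      rfl
  have hcard := Polynomial.card_rootSet_eq_natDegree hsep (h.splits c)
  have hle := Fintype.card_le_one_iff_subsingleton.mpr hroots.coe_sort
  have hpos := minpoly.natDegree_pos hint
  rw [← minpoly.natDegree_eq_one_iff]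
  omega

theorem Module.Basis.baseChange_repr_rTensor {k L A ι : Type*} [CommRing k] [CommRing L]
    [Algebra k L] [AddCommGroup A] [Module k A] (v : Basis ι k A) (π : L →ₗ[k] L)
    (x : L ⊗[k] A) (i : ι) :
    (v.baseChange L).repr (π.rTensor A x) i = π ((v.baseChange L).repr x i) := by
  induction x using TensorProduct.induction_on with
  | zero => simp
  | tmul c a => simp
  | add x y hx hy => simp_all

theorem TensorProduct.exists_one_tmul_eq_of_forall_rTensor_apply_eq_zero {k L A ι : Type*}
    [Field k] [CommRing L] [Algebra k L] [AddCommGroup A] [Module k A]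
    (π : ι → L →ₗ[k] L) (hπ : ∀ c, (∀ j, π j c = 0) → c ∈ (algebraMap k L).range)
    {x : L ⊗[k] A} (hx : ∀ j, (π j).rTensor A x = 0) : ∃ a : A, 1 ⊗ₜ a = x := by
  classical
  let v := Module.Free.chooseBasis k A
  let r := (v.baseChange L).repr x
  have hr : ∀ i, r i ∈ (algebraMap k L).range := fun i => hπ _ fun j => by
    simpa [hx j] using (v.baseChange_repr_rTensor (π j) x i).symm
  choose d hd using hr
  refine ⟨∑ i ∈ r.support, d i • v i, ?_⟩
  conv_rhs => rw [← (v.baseChange L).linearCombination_repr x]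
  simp [Finsupp.linearCombination_apply, Finsupp.sum, TensorProduct.tmul_sum, r, ← hd]

theorem IntermediateField.algHom_rTensor_restrictScalars_apply {k L A : Type*} [Field k]
    [Field L] [Algebra k L] [CommRing A] [Algebra k A] (E : IntermediateField k L)
    (π : L →ₗ[E] L)
    (χ : L ⊗[k] A →ₐ[L] L) (hχ : ∀ a, χ (1 ⊗ₜ a) ∈ E) (x : L ⊗[k] A) :
    χ ((π.restrictScalars k).rTensor A x) = π (χ x) := by
  induction x using TensorProduct.induction_on with
  | zero => simp
  | tmul c a =>
    obtain ⟨e, he⟩ : ∃ e : E, (e : L) = χ (1 ⊗ₜ a) := ⟨⟨_, hχ a⟩, rfl⟩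
    have hca (c : L) : χ (c ⊗ₜ a) = e • c := by
      have : c ⊗ₜ[k] a = c • (1 ⊗ₜ a) := by
        rw [TensorProduct.smul_tmul', smul_eq_mul, mul_one]
      rw [this, map_smul, ← he, smul_eq_mul, mul_comm]
      rfl
    rw [LinearMap.rTensor_tmul, LinearMap.restrictScalars_apply, hca, hca, map_smul]
  | add x y hx hy => simp_all

theorem Algebra.Etale.isSeparable_algHom_apply {K R L : Type*} [Field K] [CommRing R]
    [Algebra K R] [Algebra.Etale K R] [Field L] [Algebra K L] (σ : R →ₐ[K] L) (r : R) :
    IsSeparable K (σ r) := by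
  have : (RingHom.ker σ).IsPrime := RingHom.ker_isPrime σ
  rw [← Ideal.kerLiftAlg_mk σ r]
  exact (Algebra.IsSeparable.isSeparable K _).map _ (Ideal.kerLiftAlg_injective σ)

theorem Algebra.Etale.eq_zero_of_forall_algHom_apply_eq_zero {K C : Type*} [Field K]
    [IsSepClosed K] [CommRing C] [Algebra K C] [Algebra.Etale K C] {z : C}
    (hz : ∀ χ : C →ₐ[K] K, χ z = 0) : z = 0 := by
  let e := Algebra.FormallyEtale.equivPiOfIsSepClosed K C
  refine e.injective (funext fun p => ?_)
  simpa using hz ((Pi.evalAlgHom K (fun _ => K) p).comp e.toAlgHom)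

theorem TensorProduct.exists_one_tmul_eq_of_forall_algEquiv_map_eq {k L A : Type*} [Field k]
    [Field L] [Algebra k L] [Normal k L] [IsSepClosed L] [CommRing A] [Algebra k A]
    [Algebra.Etale k A] {x : L ⊗[k] A}
    (hfix : ∀ g : L ≃ₐ[k] L, Algebra.TensorProduct.map g.toAlgHom (AlgHom.id k A) x = x)
    (hsep : ∀ χ : L ⊗[k] A →ₐ[L] L, IsSeparable k (χ x)) : ∃ a : A, 1 ⊗ₜ a = x := by
  let E := separableClosure k L
  obtain ⟨W, hW⟩ := Submodule.exists_isCompl (LinearMap.range (Algebra.linearMap E L))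
  let π : L →ₗ[E] L := W.projection _ hW.symm
  have hπ (c : L) : π c = 0 ↔ IsSeparable k c := by
    simp [π, E, mem_separableClosure_iff]
  refine exists_one_tmul_eq_of_forall_rTensor_apply_eq_zero
    (fun j : Option (L ≃ₐ[k] L) =>
      j.elim (π.restrictScalars k) fun g => g.toLinearMap - LinearMap.id)
    (fun c hc => mem_range_algebraMap_of_isSeparable_of_forall_algEquiv_apply_eq
      ((hπ c).1 (hc none)) fun g => by simpa [sub_eq_zero] using hc (some g)) ?_
  rintro (_ | g)
  · refine Algebra.Etale.eq_zero_of_forall_algHom_apply_eq_zero (K := L) fun χ => ?_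
    have hχ (a : A) : χ (1 ⊗ₜ a) ∈ E := mem_separableClosure_iff.2 <|
      Algebra.Etale.isSeparable_algHom_apply
        ((χ.restrictScalars k).comp Algebra.TensorProduct.includeRight) a
    exact (E.algHom_rTensor_restrictScalars_apply π χ hχ x).trans ((hπ _).2 (hsep χ))
  · simp only [Option.elim_some, LinearMap.rTensor_sub, LinearMap.rTensor_id,
      LinearMap.sub_apply, LinearMap.id_coe, id_eq]
    exact sub_eq_zero.2 (hfix g)

theorem AlgHom.exists_comp_eq_of_range_le {R A B T : Type*} [CommSemiring R] [Semiring A]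
    [Semiring B] [Semiring T] [Algebra R A] [Algebra R B] [Algebra R T] (ι : A →ₐ[R] T)
    (hι : Function.Injective ι) (φ : B →ₐ[R] T) (h : φ.range ≤ ι.range) :
    ∃ f : B →ₐ[R] A, ι.comp f = φ := by
  refine ⟨(AlgEquiv.ofInjective ι hι).symm.toAlgHom.comp
    (φ.codRestrict ι.range fun b => h ⟨b, rfl⟩), AlgHom.ext fun b => ?_⟩
  rw [AlgHom.comp_apply, ← AlgEquiv.ofInjective_apply ι hι]
  simp

theorem Algebra.TensorProduct.map_id_injective (k L A B : Type*) [Field k] [CommRing L]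
    [Nontrivial L] [Algebra k L] [CommRing A] [Algebra k A] [CommRing B] [Algebra k B] :
    Function.Injective fun f : B →ₐ[k] A => map (AlgHom.id L L) f := by
  intro f f' h
  ext b
  apply includeRight_injective (A := L) (algebraMap k L).injective
  simpa using DFunLike.congr_fun h (1 ⊗ₜ b)

theorem Algebra.TensorProduct.exists_map_eq_of_forall_algEquiv {k L A B : Type*} [Field k]
    [Field L] [Algebra k L] [Normal k L] [IsSepClosed L] [CommRing A] [Algebra k A]
    [Algebra.Etale k A] [CommRing B] [Algebra k B] [Algebra.Etale k B]
    (F : L ⊗[k] B →ₐ[L] L ⊗[k] A)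
    (hF : ∀ (g : L ≃ₐ[k] L) (b : B),
      map g.toAlgHom (AlgHom.id k A) (F (1 ⊗ₜ b)) = F (1 ⊗ₜ b)) :
    ∃ f : B →ₐ[k] A, map (AlgHom.id L L) f = F := by
  obtain ⟨f, hf⟩ := (includeRight : A →ₐ[k] L ⊗[k] A).exists_comp_eq_of_range_le
    (includeRight_injective (algebraMap k L).injective)
    ((F.restrictScalars k).comp includeRight) <| by
      rintro _ ⟨b, rfl⟩
      exact TensorProduct.exists_one_tmul_eq_of_forall_algEquiv_map_eq (hF · b) fun χ =>
        Algebra.Etale.isSeparable_algHom_apply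
          (((χ.comp F).restrictScalars k).comp includeRight) b
  refine ⟨f, ext (Subsingleton.elim _ _) ?_⟩
  rw [← hf]
  ext b
  simp

theorem stmt10_general (k kbar A B : Type) [Field k] [Field kbar] [Algebra k kbar]
    [IsAlgClosure k kbar]
    [CommRing A] [Algebra k A] [Algebra.Etale k A]
    [CommRing B] [Algebra k B] [Algebra.Etale k B] :
    ∃ e : (B →ₐ[k] A) ≃
        {F : (kbar ⊗[k] B) →ₐ[kbar] (kbar ⊗[k] A) //
          ∀ g : kbar ≃ₐ[k] kbar,
            (Algebra.TensorProduct.map g.toAlgHom (AlgHom.id k A)).comp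
              ((F.restrictScalars k).comp
                (Algebra.TensorProduct.map g.symm.toAlgHom (AlgHom.id k B)))
              = F.restrictScalars k},
      ∀ f : B →ₐ[k] A,
        ((e f : (kbar ⊗[k] B) →ₐ[kbar] (kbar ⊗[k] A)).restrictScalars k)
          = Algebra.TensorProduct.map (AlgHom.id k kbar) f := by
  have := IsAlgClosure.isAlgClosed k (K := kbar)
  refine ⟨Equiv.ofBijective (fun f => ⟨Algebra.TensorProduct.map (AlgHom.id kbar kbar) f,
    fun g => ?_⟩) ⟨fun f f' h => ?_, fun F => ?_⟩, fun f => ?_⟩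
  · ext b <;> simp
  · exact Algebra.TensorProduct.map_id_injective k kbar A B (congrArg Subtype.val h)
  · obtain ⟨f, hf⟩ := Algebra.TensorProduct.exists_map_eq_of_forall_algEquiv F.1 fun g b => by
      simpa using AlgHom.congr_fun (F.2 g) (1 ⊗ₜ b)
    exact ⟨f, Subtype.ext hf⟩
  · rfl

/-- Let `k` be a field with algebraic closure `k̄` and absolute Galois
group `G`, and let `X = Spec A`, `Y = Spec B` be finite étale `k`-schemes.  Then the
natural base-change map `Hom_k(X,Y) → Hom_{k̄}(X_{k̄},Y_{k̄})` is injective with image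
exactly the `G`-fixed points.  In algebraic terms: `k`-algebra maps `B →ₐ[k] A` are
in bijection with those `k̄`-algebra maps `F : k̄ ⊗[k] B →ₐ[k̄] k̄ ⊗[k] A` fixed under
conjugation by every `g ∈ G` (twisting both source and target by the Galois action),
the bijection being given by base change `f ↦ id_{k̄} ⊗ f`. -/
theorem stmt10 (k kbar A B : Type) [Field k] [Field kbar] [Algebra k kbar]
    [IsAlgClosure k kbar]
    [CommRing A] [Algebra k A] [Algebra.Etale k A] [Module.Finite k A]
    [CommRing B] [Algebra k B] [Algebra.Etale k B] [Module.Finite k B] :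
    ∃ e : (B →ₐ[k] A) ≃
        {F : (kbar ⊗[k] B) →ₐ[kbar] (kbar ⊗[k] A) //
          ∀ g : kbar ≃ₐ[k] kbar,
            (Algebra.TensorProduct.map g.toAlgHom (AlgHom.id k A)).comp
              ((F.restrictScalars k).comp
                (Algebra.TensorProduct.map g.symm.toAlgHom (AlgHom.id k B)))
              = F.restrictScalars k},
      ∀ f : B →ₐ[k] A,
        ((e f : (kbar ⊗[k] B) →ₐ[kbar] (kbar ⊗[k] A)).restrictScalars k)
          = Algebra.TensorProduct.map (AlgHom.id k kbar) f :=
  stmt10_general k kbar A B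
end

section
/- In the 1-category of finite sets, the construction sending a category A to M A = ∐_{n≥0} A^n / Σ_n applied to Fin_gr^k (sequences S_1 → ⋯ → S_k of finite sets with isomorphisms of diagrams) yields Fin_gr^{k+1}: concretely, there is an equivalence of groupoids between ∐_n (Fin_gr^k)^n / Σ_n and the groupoid Fin_gr^{k+1} of sequences S_1 → ⋯ → S_{k+1}, sending an n-tuple of sequences (S^1_•, …, S^n_•) to the sequence (∐_i S^i_1 → ⋯ → ∐_i S^i_k → {1,…,n}). -/
open CategoryTheory

/-- `Fin_gr^k`, the groupoid whose objects are diagrams `S_1 → ⋯ → S_k` of finite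
sets and whose morphisms are isomorphisms of diagrams: we model a diagram as a
functor from the linear order `Fin k` to `FintypeCat`, and take the core. -/
abbrev SeqGrpd (k : ℕ) := Core (Fin k ⥤ FintypeCat)

/-- The quotient groupoid `∐_n (Fin_gr^k)^n / Σ_n`: objects are finite-set-indexed
families of objects of `Fin_gr^k` (a `T`-indexed family for `T` a finite set is the
same as an `n`-tuple up to the `Σ_n`-action, for `n = card T`), and a morphism
`(T, X) → (T', X')` is a bijection `σ : T ≃ T'` together with isomorphisms
`X t ≅ X' (σ t)` in `Fin_gr^k`. -/
def FamObj (k : ℕ) := Σ T : FintypeCat, (↥T → SeqGrpd k)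

instance (k : ℕ) : Category (FamObj k) where
  Hom A B := Σ' σ : (A.1 : Type) ≃ (B.1 : Type), ∀ t, (A.2 t ⟶ B.2 (σ t))
  id A := ⟨Equiv.refl _, fun t => 𝟙 (A.2 t)⟩
  comp f g := ⟨f.1.trans g.1, fun t => f.2 t ≫ g.2 (f.1 t)⟩
  id_comp := by
    rintro ⟨T, X⟩ ⟨T', X'⟩ ⟨σ, φ⟩
    dsimp
    congr 1
  comp_id := by
    rintro ⟨T, X⟩ ⟨T', X'⟩ ⟨σ, φ⟩
    dsimp
    congr 1
  assoc := by
    rintro A B C D ⟨σ, φ⟩ ⟨τ, ψ⟩ ⟨υ, χ⟩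
    dsimp
    congr 1

/-!
A diagram `S_1 → ⋯ → S_k → T` is a functor out of `Fin k` with a terminal object adjoined, that
is (`WithTerminal.equivComma`) a diagram `S : Fin k ⥤ FintypeCat` together with a natural map
`p : S ⟶ const T`. Such a `p` is the disjoint union of its fibres `p⁻¹(t)`, `t ∈ T`, each of
which is again a diagram `Fin k ⥤ FintypeCat`; conversely the sigma-type of a `T`-indexed family
of diagrams lies over `T` through the first projection. An isomorphism over a bijection
`σ : T ≃ T'` restricts to isomorphisms of fibres `p⁻¹(t) ≅ p'⁻¹(σ t)`, which makes the sigma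
construction fully faithful, and every `p` is the sigma-type of its fibres.
-/

universe u

namespace Fin

def withTerminalFunctor (n : ℕ) : WithTerminal (Fin n) ⥤ Fin (n + 1) :=
  WithTerminal.lift castSuccOrderEmb.monotone.functor (fun _ => homOfLE (le_last _))
    (fun _ _ _ => rfl)

instance (n : ℕ) : (withTerminalFunctor n).Full where
  map_surjective {X Y} f := by
    match X, Y with
    | .of _, .of _ => exact ⟨homOfLE (castSucc_le_castSucc_iff.mp (leOfHom f)), rfl⟩
    | _, .star => exact ⟨default, Subsingleton.elim _ _⟩
    | .star, .of j => exact absurd (leOfHom f) (castSucc_lt_last j).not_ge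

instance (n : ℕ) : (withTerminalFunctor n).Faithful where
  map_injective {X Y} f g _ := by
    match X, Y with
    | .of i, .of j => exact Subsingleton.elim (α := i ⟶ j) f g
    | _, .star => exact Subsingleton.elim f g
    | .star, .of _ => exact (f : PEmpty).elim

instance (n : ℕ) : (withTerminalFunctor n).EssSurj where
  mem_essImage j := by
    induction j using lastCases with
    | last => exact ⟨.star, ⟨Iso.refl _⟩⟩
    | cast i => exact ⟨.of i, ⟨Iso.refl _⟩⟩

instance (n : ℕ) : (withTerminalFunctor n).IsEquivalence where

noncomputable def withTerminalEquiv (n : ℕ) : WithTerminal (Fin n) ≌ Fin (n + 1) :=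
  (withTerminalFunctor n).asEquivalence

end Fin

namespace FintypeCat

variable {J : Type*} [Category J]

def sigmaFunctor {T : FintypeCat.{u}} (X : T → J ⥤ FintypeCat.{u}) : J ⥤ FintypeCat.{u} where
  obj j := of (Σ t, (X t).obj j)
  map f := homMk (Sigma.map id fun t => (X t).map f)

def sigmaCocone (T : FintypeCat.{u}) (X : T → J ⥤ FintypeCat.{u}) :
    Comma (𝟭 (J ⥤ FintypeCat.{u})) (Functor.const J) where
  left := sigmaFunctor X
  right := T
  hom := { app _ := homMk Sigma.fst }

def sigmaCoconeIso {T T' : FintypeCat.{u}} {X : T → J ⥤ FintypeCat.{u}}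
    {Y : T' → J ⥤ FintypeCat.{u}} (σ : T ≃ T') (φ : ∀ t, X t ≅ Y (σ t)) :
    sigmaCocone T X ≅ sigmaCocone T' Y :=
  Comma.isoMk
    (NatIso.ofComponents
      (fun j => equivEquivIso (Equiv.sigmaCongr σ fun t => equivEquivIso.symm ((φ t).app j)))
      fun f => hom_ext _ _ fun ⟨t, x⟩ =>
        congrArg (Sigma.mk (σ t)) (ConcreteCategory.congr_hom ((φ t).hom.naturality f) x))
    (equivEquivIso σ)

lemma comma_hom_naturality_apply (c : Comma (𝟭 (J ⥤ FintypeCat.{u})) (Functor.const J))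
    {i j : J} (f : i ⟶ j) (x : c.left.obj i) : c.hom.app j (c.left.map f x) = c.hom.app i x :=
  ConcreteCategory.congr_hom (c.hom.naturality f) x

lemma comma_w_apply {c d : Comma (𝟭 (J ⥤ FintypeCat.{u})) (Functor.const J)} (e : c ⟶ d)
    {j : J} (x : c.left.obj j) : d.hom.app j (e.left.app j x) = e.right (c.hom.app j x) :=
  ConcreteCategory.congr_hom (NatTrans.congr_app e.w j) x

def fiberFunctor (c : Comma (𝟭 (J ⥤ FintypeCat.{u})) (Functor.const J)) (t : c.right) :
    J ⥤ FintypeCat.{u} where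
  obj j := of {x : c.left.obj j // c.hom.app j x = t}
  map f := homMk fun x => ⟨c.left.map f x.1, (comma_hom_naturality_apply c f x.1).trans x.2⟩

def fiberFunctorIso {c d : Comma (𝟭 (J ⥤ FintypeCat.{u})) (Functor.const J)} (e : c ≅ d)
    (t : c.right) : fiberFunctor c t ≅ fiberFunctor d (e.hom.right t) :=
  NatIso.ofComponents
    (fun j => equivEquivIso <|
      (equivEquivIso.symm ((Comma.leftIso e).app j)).subtypeEquiv fun x => by
        rw [← (equivEquivIso.symm (Comma.rightIso e)).apply_eq_iff_eq]
        exact Iff.of_eq (congrArg (· = _) (comma_w_apply e.hom x).symm))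
    fun f => hom_ext _ _ fun x =>
      Subtype.ext (ConcreteCategory.congr_hom (e.hom.left.naturality f) x.1)

def fiberFunctorSigmaCoconeIso (T : FintypeCat.{u}) (X : T → J ⥤ FintypeCat.{u}) (t : T) :
    fiberFunctor (sigmaCocone T X) t ≅ X t :=
  NatIso.ofComponents (fun _ => equivEquivIso (Equiv.sigmaSubtype t))
    fun _ => hom_ext _ _ fun ⟨⟨_, _⟩, h⟩ => by subst h; rfl

def sigmaCoconeFiberFunctorIso (c : Comma (𝟭 (J ⥤ FintypeCat.{u})) (Functor.const J)) :
    sigmaCocone c.right (fiberFunctor c) ≅ c :=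
  Comma.isoMk (NatIso.ofComponents fun j => equivEquivIso (Equiv.sigmaFiberEquiv (c.hom.app j)))
    (Iso.refl _) (NatTrans.ext <| funext fun _ => hom_ext _ _ fun ⟨_, _, h⟩ => h)

end FintypeCat

namespace FamObj

open FintypeCat

variable {k : ℕ}

def toSigmaCocone :
    FamObj k ⥤ Core (Comma (𝟭 (Fin k ⥤ FintypeCat.{0})) (Functor.const (Fin k))) where
  obj A := ⟨sigmaCocone A.1 fun t => (A.2 t).of⟩
  map f := ⟨sigmaCoconeIso f.1 fun t => (f.2 t).iso⟩
  map_id _ := Core.hom_ext <| Comma.hom_ext _ _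
    (NatTrans.ext <| funext fun _ => hom_ext _ _ fun _ => rfl) (hom_ext _ _ fun _ => rfl)
  map_comp _ _ := Core.hom_ext <| Comma.hom_ext _ _
    (NatTrans.ext <| funext fun _ => hom_ext _ _ fun _ => rfl) (hom_ext _ _ fun _ => rfl)

instance : (toSigmaCocone (k := k)).Faithful where
  map_injective {A B} f g h := by
    obtain ⟨σ, φ⟩ := f
    obtain ⟨τ, ψ⟩ := g
    have h_right := congrArg (fun α => α.iso.hom.right) h
    have h_left := congrArg (fun α => α.iso.hom.left) h
    obtain rfl : σ = τ := Equiv.ext fun t => ConcreteCategory.congr_hom h_right t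
    refine congrArg (PSigma.mk σ) (funext fun t => Core.hom_ext <| NatTrans.ext <|
      funext fun j => hom_ext _ _ fun x => ?_)
    have h_tx := ConcreteCategory.congr_hom (NatTrans.congr_app h_left j) ⟨t, x⟩
    exact eq_of_heq (Sigma.ext_iff.mp h_tx).2

instance : (toSigmaCocone (k := k)).Full where
  map_surjective {A B} α := by
    refine ⟨⟨equivEquivIso.symm (Comma.rightIso α.iso), fun t =>
      ⟨(fiberFunctorSigmaCoconeIso A.1 (fun t => (A.2 t).of) t).symm ≪≫ fiberFunctorIso α.iso t ≪≫
        fiberFunctorSigmaCoconeIso B.1 (fun t => (B.2 t).of) _⟩⟩, ?_⟩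
    refine Core.hom_ext <| Comma.hom_ext _ _
      (NatTrans.ext <| funext fun j => hom_ext _ _ fun ⟨t, x⟩ => ?_) (hom_ext _ _ fun _ => rfl)
    exact congrArg Subtype.val ((Equiv.sigmaSubtype (α.iso.hom.right t)).symm_apply_apply
      ⟨α.iso.hom.left.app j ⟨t, x⟩, comma_w_apply α.iso.hom ⟨t, x⟩⟩)

instance : (toSigmaCocone (k := k)).EssSurj where
  mem_essImage c :=
    ⟨⟨c.of.right, fun t => ⟨fiberFunctor c.of t⟩⟩, ⟨Core.isoMk (sigmaCoconeFiberFunctorIso c.of)⟩⟩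

instance : (toSigmaCocone (k := k)).IsEquivalence where

noncomputable def equivSeqGrpd (k : ℕ) : FamObj k ≌ SeqGrpd (k + 1) :=
  toSigmaCocone.asEquivalence.trans <|
    WithTerminal.equivComma.symm.core.trans (Equivalence.congrLeft (Fin.withTerminalEquiv k)).core

noncomputable def equivSeqGrpdObjIso (A : FamObj k) (x : WithTerminal (Fin k)) :
    ((equivSeqGrpd k).functor.obj A).of.obj ((Fin.withTerminalFunctor k).obj x) ≅
      (WithTerminal.ofCommaObject (sigmaCocone A.1 fun t => (A.2 t).of)).obj x :=
  (WithTerminal.ofCommaObject _).mapIso ((Fin.withTerminalEquiv k).unitIso.app x).symm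

end FamObj

/-- The construction `M A = ∐_{n≥0} A^n / Σ_n` applied to `Fin_gr^k`
yields `Fin_gr^{k+1}`: there is an equivalence of groupoids between
`∐_n (Fin_gr^k)^n / Σ_n` (modelled by `FamObj k`) and the groupoid `Fin_gr^{k+1}` of
sequences `S_1 → ⋯ → S_{k+1}`, sending a tuple of sequences `(S^1_•, …, S^n_•)` to
the sequence `(∐_i S^i_1 → ⋯ → ∐_i S^i_k → {1,…,n})`: the last entry of the image
sequence is the indexing set, and the `j`-th entry is the disjoint union
`Σ t, (X t)_j` of the `j`-th entries of the family. -/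
theorem stmt13 (k : ℕ) :
    ∃ E : FamObj k ≌ SeqGrpd (k + 1),
      ∀ A : FamObj k,
        Nonempty
          ((((Core.inclusion (Fin (k+1) ⥤ FintypeCat)).obj (E.functor.obj A)).obj
              (Fin.last k) : Type) ≃ (A.1 : Type)) ∧
        ∀ j : Fin k,
          Nonempty
            ((((Core.inclusion (Fin (k+1) ⥤ FintypeCat)).obj (E.functor.obj A)).obj
                j.castSucc : Type) ≃ Σ t : (A.1 : Type), ((A.2 t).of.obj j : Type)) :=
  ⟨FamObj.equivSeqGrpd k, fun A =>
    ⟨⟨FintypeCat.equivEquivIso.symm (FamObj.equivSeqGrpdObjIso A .star)⟩,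
      fun j => ⟨FintypeCat.equivEquivIso.symm (FamObj.equivSeqGrpdObjIso A (.of j))⟩⟩⟩
end

section
/- Combining the Galois-descent identifications with the matrix characterization of comonoid morphisms: for X, Y finite étale over a field k, the set of comonoid morphisms from the 0-cycle coalgebra of X to that of Y (matrices in Z_0(X ×_k Y) ≅ ℚ-valued functions on closed points of X ×_k Y satisfying the counit and comultiplication equations) is in natural bijection with the set Hom_k(X, Y) of k-scheme morphisms from X to Y. -/
/-!
Over `k̄` the equations (ε), (δ) say that every column of the matrix is a `0/1` vector with
exactly one `1`, i.e. the matrix is the graph of a map `g : X(k̄) → Y(k̄)`. A cycle on the closed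
points of `X ×_k Y` is the same as a matrix that is invariant under `Aut(k̄/k)`, since the
closed points are the orbits of the geometric points; for a graph this invariance means that `g`
is equivariant. Finally an equivariant `g` comes from a unique `h : B →ₐ[k] A`: for `p ∈ X(k̄)`
every `τ` fixing the residue field of `p` fixes `g p`, so by separability `g p (B)` lies in that
residue field, and the Chinese remainder theorem for the reduced artinian ring `A` then produces
`h b` with prescribed values `g p b` at all geometric points `p`.
-/

open scoped TensorProduct Kronecker BigOperators

/-- The comonoid-morphism equations for a matrix `C` (rows: points of `Y`, columns:
points of `X`): compatibility with the diagonal comultiplications and the counits. -/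
def Eqns {X Y : Type} [Fintype X] [Fintype Y] [DecidableEq X] [DecidableEq Y]
    (C : Matrix Y X ℚ) : Prop :=
  (C ⊗ₖ C) * deltaM X = deltaM Y * C ∧ epsM Y * C = epsM X

section Graph

variable {X Y : Type} [DecidableEq Y]

def graphMatrix (g : X → Y) : Matrix Y X ℚ := fun q p => if q = g p then 1 else 0

theorem graphMatrix_injective : Function.Injective (graphMatrix : (X → Y) → Matrix Y X ℚ) :=
  fun g g' h => funext fun p => by
    simpa [graphMatrix] using congrFun (congrFun h (g p)) p

variable [Fintype X] [Fintype Y] [DecidableEq X]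

theorem eqns_iff (C : Matrix Y X ℚ) : Eqns C ↔
    (∀ q₁ q₂ p, C q₁ p * C q₂ p = if q₁ = q₂ then C q₁ p else 0) ∧ ∀ p, ∑ q, C q p = 1 := by
  have hcomul (q₁ q₂ p) : ((C ⊗ₖ C) * deltaM X) (q₁, q₂) p = C q₁ p * C q₂ p := by
    simp [Matrix.mul_apply, deltaM, ite_and, Fintype.sum_prod_type]
  have hdiag (q₁ q₂ p) : (deltaM Y * C) (q₁, q₂) p = if q₁ = q₂ then C q₁ p else 0 := by
    simp [Matrix.mul_apply, deltaM, ite_and, eq_comm]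
  have hcounit (p) : (epsM Y * C) () p = ∑ q, C q p := by
    simp [Matrix.mul_apply, epsM]
  constructor
  · rintro ⟨hδ, hε⟩
    exact ⟨fun q₁ q₂ p => by rw [← hcomul, ← hdiag, hδ], fun p => by rw [← hcounit, hε]; rfl⟩
  · rintro ⟨hδ, hε⟩
    refine ⟨Matrix.ext fun ⟨q₁, q₂⟩ p => ?_, Matrix.ext fun _ p => ?_⟩
    · rw [hcomul, hdiag, hδ]
    · rw [hcounit, hε]; rfl

theorem eqns_iff_exists_eq_graphMatrix (C : Matrix Y X ℚ) :
    Eqns C ↔ ∃ g : X → Y, C = graphMatrix g := by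
  rw [eqns_iff]
  constructor
  · rintro ⟨hδ, hε⟩
    have hcol (p : X) : ∃ q, C q p ≠ 0 := by
      by_contra! h
      simpa [h] using hε p
    choose g hg using hcol
    have hgp (p : X) : C (g p) p = 1 :=
      (mul_eq_left₀ (hg p)).mp (by simpa using hδ (g p) (g p) p)
    refine ⟨g, Matrix.ext fun q p => ?_⟩
    by_cases hq : q = g p
    · simp [graphMatrix, hq, hgp]
    · simpa [graphMatrix, hq, hgp] using hδ q (g p) p
  · rintro ⟨g, rfl⟩
    refine ⟨fun q₁ q₂ p => ?_, fun p => by simp [graphMatrix]⟩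
    simp only [graphMatrix]
    split_ifs <;> simp_all

end Graph

open IntermediateField in
theorem mem_range_of_forall_algHom_apply_eq {F K : Type*} [Field F] [Field K] [Algebra F K]
    [IsAlgClosed K] [Algebra.IsAlgebraic F K] {x : K} (hx : IsSeparable F x)
    (h : ∀ τ : K →ₐ[F] K, τ x = x) : x ∈ (algebraMap F K).range := by
  have hint : IsIntegral F x := hx.isIntegral
  -- each root `y` of the minimal polynomial is `τ x` for an extension `τ` of `F⟮x⟯ → K, x ↦ y`
  have hroots (y : { y // y ∈ (minpoly F x).aroots K }) : (y : K) = x := by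
    obtain ⟨τ, hτ⟩ := IsAlgClosed.surjective_domRestrict_of_isAlgebraic (K := F) (L := F⟮x⟯)
      (E := K) (M := K) ((algHomAdjoinIntegralEquiv F hint).symm y)
    rw [← algHomAdjoinIntegralEquiv_symm_apply_gen F hint y, ← hτ]
    exact h τ
  have : Subsingleton { y // y ∈ (minpoly F x).aroots K } :=
    ⟨fun y y' => Subtype.ext ((hroots y).trans (hroots y').symm)⟩
  have hcard := card_algHom_adjoin_integral F (K := K) hint hx (IsAlgClosed.splits _)
  rw [Nat.card_congr (algHomAdjoinIntegralEquiv F hint)] at hcard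
  rw [← minpoly.natDegree_eq_one_iff]
  have := Finite.card_le_one_iff_subsingleton.mpr this
  have := minpoly.natDegree_pos hint
  omega

section Points

variable {k K R : Type*} [Field k] [Field K] [Algebra k K] [CommRing R] [Algebra k R]

theorem AlgHom.ker_comp_left (τ : K →ₐ[k] K) (σ : R →ₐ[k] K) :
    RingHom.ker (τ.comp σ) = RingHom.ker σ :=
  RingHom.ker_comp_of_injective (σ : R →+* K) τ.toRingHom.injective

theorem AlgHom.isSeparable_apply [Algebra.Etale k R] (σ : R →ₐ[k] K) (r : R) :
    IsSeparable k (σ r) := by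
  have : (RingHom.ker σ).IsPrime := RingHom.ker_isPrime σ
  rw [← Ideal.kerLiftAlg_mk]
  exact (Algebra.IsSeparable.isSeparable k (Ideal.Quotient.mk (RingHom.ker σ) r)).map
    (Ideal.kerLiftAlg σ) (Ideal.kerLiftAlg_injective σ)

variable [IsAlgClosed K]

theorem AlgHom.exists_ker_eq [Module.Finite k R] (m : Ideal R) [m.IsMaximal] :
    ∃ σ : R →ₐ[k] K, RingHom.ker σ = m := by
  let := Ideal.Quotient.field m
  have : Module.Finite k (R ⧸ m) := Module.Finite.of_surjective
    (Ideal.Quotient.mkₐ k m).toLinearMap (Ideal.Quotient.mkₐ_surjective k m)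
  let ι : R ⧸ m →ₐ[k] K := IsAlgClosed.lift
  refine ⟨ι.comp (Ideal.Quotient.mkₐ k m), ?_⟩
  change RingHom.ker ((ι : R ⧸ m →+* K).comp (Ideal.Quotient.mk m)) = m
  rw [RingHom.ker_comp_of_injective _ (ι : R ⧸ m →+* K).injective, Ideal.mk_ker]

theorem AlgHom.eq_of_forall_apply_eq [Module.Finite k R] [IsReduced R] {a a' : R}
    (h : ∀ σ : R →ₐ[k] K, σ a = σ a') : a = a' := by
  have : IsArtinianRing R := .of_finite k R
  apply (IsArtinianRing.equivPi R).injective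
  ext m
  obtain ⟨σ, hσ⟩ := AlgHom.exists_ker_eq (K := K) (k := k) m.asIdeal
  rw [IsArtinianRing.equivPi_apply, IsArtinianRing.equivPi_apply, Ideal.Quotient.eq, ← hσ,
    RingHom.mem_ker, map_sub, h, sub_self]

variable [Algebra.IsAlgebraic k K]

theorem AlgHom.exists_comp_eq {L : Type*} [Field L] [Algebra k L] (φ φ' : L →ₐ[k] K) :
    ∃ τ : K →ₐ[k] K, τ.comp φ = φ' := by
  let : Algebra L K := φ.toAlgebra
  have : IsScalarTower k L K := IsScalarTower.of_algebraMap_eq fun c => (φ.commutes c).symm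
  have : Algebra.IsAlgebraic L K := Algebra.IsAlgebraic.tower_top (K := k) L
  exact IsAlgClosed.surjective_domRestrict_of_isAlgebraic (K := k) (L := L) (M := K) (E := K) φ'

theorem AlgHom.exists_comp_eq_of_ker_eq [Module.Finite k R] {σ σ' : R →ₐ[k] K}
    (h : RingHom.ker σ = RingHom.ker σ') : ∃ τ : K →ₐ[k] K, τ.comp σ = σ' := by
  have : IsArtinianRing R := .of_finite k R
  let I := RingHom.ker σ
  have : I.IsPrime := RingHom.ker_isPrime σ
  have : I.IsMaximal := IsArtinianRing.isMaximal_of_isPrime I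
  let := Ideal.Quotient.field I
  obtain ⟨τ, hτ⟩ := AlgHom.exists_comp_eq (Ideal.Quotient.liftₐ I σ fun _ ha => ha)
    (Ideal.Quotient.liftₐ I σ' fun a ha => (h ▸ ha : a ∈ RingHom.ker σ'))
  exact ⟨τ, AlgHom.ext fun r => AlgHom.congr_fun hτ (Ideal.Quotient.mk I r)⟩

/-- Prescribe the value at one geometric point over each closed point by the Chinese remainder
theorem; equivariance of `u` makes it correct at the conjugate points as well. -/
theorem AlgHom.exists_forall_apply_eq [Module.Finite k R] [IsReduced R] (u : (R →ₐ[k] K) → K)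
    (hu : ∀ (τ : K →ₐ[k] K) σ, u (τ.comp σ) = τ (u σ)) (hrange : ∀ σ, u σ ∈ σ.range) :
    ∃ a : R, ∀ σ : R →ₐ[k] K, σ a = u σ := by
  have : IsArtinianRing R := .of_finite k R
  choose σ hσ using fun m : MaximalSpectrum R => AlgHom.exists_ker_eq (K := K) (k := k) m.asIdeal
  choose a ha using fun m => hrange (σ m)
  refine ⟨(IsArtinianRing.equivPi R).symm fun m => Ideal.Quotient.mk _ (a m), fun ρ => ?_⟩
  have : (RingHom.ker ρ).IsPrime := RingHom.ker_isPrime ρ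
  let m : MaximalSpectrum R := ⟨RingHom.ker ρ, IsArtinianRing.isMaximal_of_isPrime _⟩
  obtain ⟨τ, hτ⟩ := exists_comp_eq_of_ker_eq (hσ m)
  have hm : (IsArtinianRing.equivPi R).symm (fun m => Ideal.Quotient.mk _ (a m)) - a m ∈
      RingHom.ker (σ m) := by
    rw [hσ m, ← Ideal.Quotient.eq, ← IsArtinianRing.equivPi_apply, AlgEquiv.apply_symm_apply]
  rw [RingHom.mem_ker, map_sub, sub_eq_zero] at hm
  rw [← hτ, comp_apply, hm, hu]
  exact congrArg τ (ha m)

end Points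

section Descent

variable {k K A B : Type*} [Field k] [Field K] [Algebra k K] [IsAlgClosed K]
  [CommRing A] [Algebra k A] [Module.Finite k A] [CommRing B] [Algebra k B]

theorem AlgHom.eq_of_forall_comp_eq [IsReduced A] {h h' : B →ₐ[k] A}
    (hh : ∀ p : A →ₐ[k] K, p.comp h = p.comp h') : h = h' :=
  AlgHom.ext fun b => eq_of_forall_apply_eq fun p => AlgHom.congr_fun (hh p) b

variable [Algebra.IsAlgebraic k K] [Algebra.Etale k B]

theorem AlgHom.apply_mem_range_of_equivariant (g : (A →ₐ[k] K) → (B →ₐ[k] K))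
    (hg : ∀ (τ : K →ₐ[k] K) p, g (τ.comp p) = τ.comp (g p)) (p : A →ₐ[k] K) (b : B) :
    g p b ∈ p.range := by
  have : IsArtinianRing A := .of_finite k A
  let I := RingHom.ker p
  have : I.IsPrime := RingHom.ker_isPrime p
  have : I.IsMaximal := IsArtinianRing.isMaximal_of_isPrime I
  let := Ideal.Quotient.field I
  let : Algebra (A ⧸ I) K := (Ideal.kerLiftAlg p).toAlgebra
  have : IsScalarTower k (A ⧸ I) K :=
    IsScalarTower.of_algebraMap_eq fun c => ((Ideal.kerLiftAlg p).commutes c).symm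
  have : Algebra.IsAlgebraic (A ⧸ I) K := Algebra.IsAlgebraic.tower_top (K := k) _
  have hfix (τ : K →ₐ[A ⧸ I] K) : τ (g p b) = g p b := by
    have hτp : (τ.restrictScalars k).comp p = p :=
      AlgHom.ext fun a => τ.commutes (Ideal.Quotient.mk I a)
    simpa [hτp] using congrArg (fun q : B →ₐ[k] K => q b) (hg (τ.restrictScalars k) p).symm
  obtain ⟨c, hc⟩ := mem_range_of_forall_algHom_apply_eq
    ((isSeparable_apply (g p) b).tower_top (A ⧸ I)) hfix
  obtain ⟨a, rfl⟩ := Ideal.Quotient.mk_surjective c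
  exact ⟨a, hc⟩

theorem AlgHom.exists_comp_eq_of_equivariant [IsReduced A] (g : (A →ₐ[k] K) → (B →ₐ[k] K))
    (hg : ∀ (τ : K →ₐ[k] K) p, g (τ.comp p) = τ.comp (g p)) :
    ∃ h : B →ₐ[k] A, ∀ p, p.comp h = g p := by
  let ev : A →ₐ[k] (A →ₐ[k] K) → K := AlgHom.pi fun p => p
  have hev : Function.Injective ev := fun a a' h => eq_of_forall_apply_eq (congrFun h)
  have hmem (b : B) : AlgHom.pi (fun p => g p) b ∈ ev.range := by
    obtain ⟨a, ha⟩ := exists_forall_apply_eq (fun p => g p b) (fun τ p => by rw [hg]; rfl)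
      (fun p => apply_mem_range_of_equivariant g hg p b)
    exact ⟨a, funext ha⟩
  let gB : B →ₐ[k] ev.range := (AlgHom.pi fun p => g p).codRestrict ev.range hmem
  refine ⟨(AlgEquiv.ofInjective ev hev).symm.toAlgHom.comp gB, fun p => AlgHom.ext fun b => ?_⟩
  exact congrFun (congrArg Subtype.val ((AlgEquiv.ofInjective ev hev).apply_symm_apply (gB b))) p

end Descent

section ClosedPoints

variable {k K R : Type*} [Field k] [Field K] [Algebra k K] [CommRing R] [Algebra k R]

def IsClosedPointMap (π : (R →ₐ[k] K) → MaximalSpectrum R) : Prop :=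
  ∀ σ, (π σ).asIdeal = RingHom.ker σ.toRingHom

namespace IsClosedPointMap

variable {π : (R →ₐ[k] K) → MaximalSpectrum R}

theorem apply_comp (hπ : IsClosedPointMap π) (τ : K →ₐ[k] K) (σ : R →ₐ[k] K) :
    π (τ.comp σ) = π σ :=
  MaximalSpectrum.ext (by rw [hπ, hπ]; exact AlgHom.ker_comp_left τ σ)

variable [IsAlgClosed K] [Module.Finite k R]

theorem surjective (hπ : IsClosedPointMap π) : Function.Surjective π := fun m => by
  obtain ⟨σ, hσ⟩ := AlgHom.exists_ker_eq (K := K) (k := k) m.asIdeal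
  exact ⟨σ, MaximalSpectrum.ext ((hπ σ).trans hσ)⟩

variable [Algebra.IsAlgebraic k K]

theorem exists_comp_eq_of_apply_eq (hπ : IsClosedPointMap π) {σ σ' : R →ₐ[k] K}
    (h : π σ = π σ') : ∃ τ : K →ₐ[k] K, τ.comp σ = σ' :=
  AlgHom.exists_comp_eq_of_ker_eq <|
    (hπ σ).symm.trans ((congrArg MaximalSpectrum.asIdeal h).trans (hπ σ'))

theorem exists_finsupp_apply_eq (hπ : IsClosedPointMap π) {M : Type*} [Zero M]
    (φ : (R →ₐ[k] K) → M) (hφ : ∀ (τ : K →ₐ[k] K) σ, φ (τ.comp σ) = φ σ) :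
    ∃ f : MaximalSpectrum R →₀ M, ∀ σ, f (π σ) = φ σ := by
  have : IsArtinianRing R := .of_finite k R
  refine ⟨Finsupp.equivFunOnFinite.symm fun m => φ (Function.surjInv hπ.surjective m),
    fun σ => ?_⟩
  obtain ⟨τ, hτ⟩ := hπ.exists_comp_eq_of_apply_eq (Function.surjInv_eq hπ.surjective (π σ))
  rw [Finsupp.coe_equivFunOnFinite_symm, ← hφ τ, hτ]

end IsClosedPointMap

end ClosedPoints

section Cycles

variable {k K A B : Type} [Field k] [Field K] [Algebra k K]
  [CommRing A] [Algebra k A] [CommRing B] [Algebra k B]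

/-- Every `k`-endomorphism of an algebraic extension `K` is an automorphism, so this is
invariance under `Aut(K/k)`. -/
def IsGaloisInvariant (C : Matrix (B →ₐ[k] K) (A →ₐ[k] K) ℚ) : Prop :=
  ∀ (τ : K →ₐ[k] K) p q, C (τ.comp q) (τ.comp p) = C q p

def cycleMatrix (π : (A ⊗[k] B →ₐ[k] K) → MaximalSpectrum (A ⊗[k] B))
    (j : (A ⊗[k] B →ₐ[k] K) ≃ (A →ₐ[k] K) × (B →ₐ[k] K))
    (f : MaximalSpectrum (A ⊗[k] B) →₀ ℚ) : Matrix (B →ₐ[k] K) (A →ₐ[k] K) ℚ :=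
  fun q p => f (π (j.symm (p, q)))

theorem graphMatrix_comp_isGaloisInvariant [DecidableEq (B →ₐ[k] K)] (h : B →ₐ[k] A) :
    IsGaloisInvariant (graphMatrix fun p : A →ₐ[k] K => p.comp h) := fun τ p q => by
  simp only [graphMatrix, AlgHom.comp_assoc, AlgHom.cancel_left τ.toRingHom.injective]

theorem comp_apply_eq_of_graphMatrix_isGaloisInvariant [DecidableEq (B →ₐ[k] K)]
    {g : (A →ₐ[k] K) → (B →ₐ[k] K)}
    (hg : IsGaloisInvariant (graphMatrix g)) (τ : K →ₐ[k] K) (p : A →ₐ[k] K) :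
    g (τ.comp p) = τ.comp (g p) := by
  have := hg τ p (g p)
  simp only [graphMatrix, if_true] at this
  split_ifs at this with h
  exacts [h.symm, absurd this zero_ne_one]

variable {π : (A ⊗[k] B →ₐ[k] K) → MaximalSpectrum (A ⊗[k] B)}
  {j : (A ⊗[k] B →ₐ[k] K) ≃ (A →ₐ[k] K) × (B →ₐ[k] K)}

theorem apply_comp_of_forall_apply_tmul
    (hj : ∀ σ, (∀ a : A, (j σ).1 a = σ (a ⊗ₜ 1)) ∧ (∀ b : B, (j σ).2 b = σ (1 ⊗ₜ b)))
    (τ : K →ₐ[k] K) (σ : A ⊗[k] B →ₐ[k] K) :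
    j (τ.comp σ) = (τ.comp (j σ).1, τ.comp (j σ).2) :=
  Prod.ext (AlgHom.ext fun a => by simp [(hj _).1]) (AlgHom.ext fun b => by simp [(hj _).2])

theorem cycleMatrix_isGaloisInvariant (hπ : IsClosedPointMap π)
    (hj : ∀ (τ : K →ₐ[k] K) σ, j (τ.comp σ) = (τ.comp (j σ).1, τ.comp (j σ).2))
    (f : MaximalSpectrum (A ⊗[k] B) →₀ ℚ) : IsGaloisInvariant (cycleMatrix π j f) :=
  fun τ p q => by
    have : j.symm (τ.comp p, τ.comp q) = τ.comp (j.symm (p, q)) := by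
      rw [Equiv.symm_apply_eq, hj, Equiv.apply_symm_apply]
    simp only [cycleMatrix, this, hπ.apply_comp]

variable [IsAlgClosed K] [Module.Finite k A]

theorem graphMatrix_comp_injective [IsReduced A] [DecidableEq (B →ₐ[k] K)] :
    Function.Injective fun h : B →ₐ[k] A => graphMatrix fun p : A →ₐ[k] K => p.comp h :=
  fun _ _ hh => AlgHom.eq_of_forall_comp_eq fun p => congrFun (graphMatrix_injective hh) p

theorem exists_eq_graphMatrix_comp_of_eqns [Algebra.IsAlgebraic k K] [IsReduced A]
    [Algebra.Etale k B] [Fintype (A →ₐ[k] K)] [Fintype (B →ₐ[k] K)] [DecidableEq (A →ₐ[k] K)]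
    [DecidableEq (B →ₐ[k] K)] (hπ : IsClosedPointMap π)
    (hj : ∀ (τ : K →ₐ[k] K) σ, j (τ.comp σ) = (τ.comp (j σ).1, τ.comp (j σ).2))
    {f : MaximalSpectrum (A ⊗[k] B) →₀ ℚ} (hf : Eqns (cycleMatrix π j f)) :
    ∃ h : B →ₐ[k] A, cycleMatrix π j f = graphMatrix fun p => p.comp h := by
  obtain ⟨g, hg⟩ := (eqns_iff_exists_eq_graphMatrix _).mp hf
  obtain ⟨h, hh⟩ := AlgHom.exists_comp_eq_of_equivariant g
    (comp_apply_eq_of_graphMatrix_isGaloisInvariant (hg ▸ cycleMatrix_isGaloisInvariant hπ hj f))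
  exact ⟨h, by rw [hg, funext hh]⟩

variable [Module.Finite k B]

theorem cycleMatrix_injective (hπ : IsClosedPointMap π) : Function.Injective (cycleMatrix π j) :=
  fun f f' h => Finsupp.ext fun m => by
    obtain ⟨σ, rfl⟩ := hπ.surjective m
    simpa [cycleMatrix] using congrFun (congrFun h (j σ).2) (j σ).1

theorem exists_cycleMatrix_eq [Algebra.IsAlgebraic k K] (hπ : IsClosedPointMap π)
    (hj : ∀ (τ : K →ₐ[k] K) σ, j (τ.comp σ) = (τ.comp (j σ).1, τ.comp (j σ).2))
    {C : Matrix (B →ₐ[k] K) (A →ₐ[k] K) ℚ} (hC : IsGaloisInvariant C) :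
    ∃ f, cycleMatrix π j f = C := by
  obtain ⟨f, hf⟩ := hπ.exists_finsupp_apply_eq (fun σ => C (j σ).2 (j σ).1)
    fun τ σ => by simp only [hj]; exact hC τ _ _
  exact ⟨f, Matrix.ext fun q p => by simp [cycleMatrix, hf]⟩

end Cycles

/-- For `X = Spec A`, `Y = Spec B` finite étale over a field `k`, the
set of comonoid morphisms from the 0-cycle coalgebra of `X` to that of `Y` — i.e.
0-cycles in `Z_0(X ×_k Y)` (ℚ-valued functions on the closed points of `X ×_k Y`)
whose base change to `k̄` satisfies the counit and comultiplication matrix equations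
— is in natural bijection with the set `Hom_k(X,Y)` of `k`-scheme morphisms
(equivalently, `k`-algebra maps `B →ₐ[k] A`); naturality is recorded by the
condition that the graph of the induced map on `k̄`-points (`p ↦ p ∘ h`) is the
support of the base-changed cycle. -/
theorem stmt19 (k kbar A B : Type) [Field k] [Field kbar] [Algebra k kbar]
    [IsAlgClosure k kbar]
    [CommRing A] [Algebra k A] [Algebra.Etale k A] [Module.Finite k A]
    [CommRing B] [Algebra k B] [Algebra.Etale k B] [Module.Finite k B]
    [Fintype (A →ₐ[k] kbar)] [Fintype (B →ₐ[k] kbar)]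
    [DecidableEq (A →ₐ[k] kbar)] [DecidableEq (B →ₐ[k] kbar)]
    (π : ((A ⊗[k] B) →ₐ[k] kbar) → MaximalSpectrum (A ⊗[k] B))
    (hπ : ∀ σ, (π σ).asIdeal = RingHom.ker σ.toRingHom)
    (j : ((A ⊗[k] B) →ₐ[k] kbar) ≃ ((A →ₐ[k] kbar) × (B →ₐ[k] kbar)))
    (hj : ∀ σ, (∀ a : A, (j σ).1 a = σ (a ⊗ₜ 1)) ∧ (∀ b : B, (j σ).2 b = σ (1 ⊗ₜ b))) :
    -- the base-changed cycle viewed as a matrix (rows: `Y(k̄)`, columns: `X(k̄)`)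
    letI M : (MaximalSpectrum (A ⊗[k] B) →₀ ℚ) →
        Matrix (B →ₐ[k] kbar) (A →ₐ[k] kbar) ℚ :=
      fun f q p => f (π (j.symm (p, q)))
    ∃ e : {f : MaximalSpectrum (A ⊗[k] B) →₀ ℚ // Eqns (M f)} ≃ (B →ₐ[k] A),
      ∀ (f : {f : MaximalSpectrum (A ⊗[k] B) →₀ ℚ // Eqns (M f)})
        (p : A →ₐ[k] kbar), M (f : _) (p.comp (e f)) p = 1 := by
  have : IsAlgClosed kbar := IsAlgClosure.isAlgClosed k
  have : IsReduced A := Algebra.FormallyUnramified.isReduced_of_field k A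
  have hj := apply_comp_of_forall_apply_tmul hj
  change ∃ e : {f // Eqns (cycleMatrix π j f)} ≃ (B →ₐ[k] A), ∀ f p,
    cycleMatrix π j f.1 (p.comp (e f)) p = 1
  choose cycle hcycle using fun h : B →ₐ[k] A =>
    exists_cycleMatrix_eq hπ hj (graphMatrix_comp_isGaloisInvariant h)
  let Φ (h : B →ₐ[k] A) : {f // Eqns (cycleMatrix π j f)} :=
    ⟨cycle h, (eqns_iff_exists_eq_graphMatrix _).mpr ⟨_, hcycle h⟩⟩
  have hΦ : Function.Bijective Φ := by
    refine ⟨fun _ _ hh => graphMatrix_comp_injective (K := kbar) ?_, fun f => ?_⟩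
    · simpa only [Φ, hcycle] using congrArg (fun f => cycleMatrix π j f.1) hh
    · obtain ⟨h, hh⟩ := exists_eq_graphMatrix_comp_of_eqns hπ hj f.2
      exact ⟨h, Subtype.ext (cycleMatrix_injective (j := j) hπ (by rw [hcycle, hh]))⟩
  refine ⟨(Equiv.ofBijective Φ hΦ).symm, fun f p => ?_⟩
  obtain ⟨h, rfl⟩ := hΦ.2 f
  simp [Φ, hcycle, graphMatrix]
end
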